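/- arXiv:2106.02704 — 3 statements merged into one kernel-verified Lean document; each statement's English description precedes it below -/
import Mathlib

section
/- (Lemma 3.3(a).) Let (M_n)_{n≥1} be a sequence of positive real numbers satisfying ∑_{n=1}^∞ M_n^{−1/n} = ∞. Suppose (K_n)_{n≥1} is another sequence of positive real numbers such that K_n ≤ a·M_n + b^n for all n, for some constants a, b > 0. Then ∑_{n=1}^∞ K_n^{−1/n} = ∞. -/
set_option maxHeartbeats 1000000


/-- **Lemma 3.3(a).** If `(M n)` is a sequence of positive reals with
`∑ M n ^ (-1/n) = ∞` (indexed by `n ≥ 1`), and `(K n)` is another sequence of positive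
reals with `K n ≤ a * M n + b ^ n` for some constants `a, b > 0`, then
`∑ K n ^ (-1/n) = ∞`. Divergence of these nonnegative series is expressed as
non-summability. -/
theorem lemma_3_3_a (M K : ℕ → ℝ) (a b : ℝ) (ha : 0 < a) (hb : 0 < b)
    (hM : ∀ n : ℕ, 1 ≤ n → 0 < M n) (hK : ∀ n : ℕ, 1 ≤ n → 0 < K n)
    (hbound : ∀ n : ℕ, 1 ≤ n → K n ≤ a * M n + b ^ n)
    (hdiv : ¬ Summable (fun n : ℕ => M (n + 1) ^ (-(1 : ℝ) / ((n : ℝ) + 1)))) :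
    ¬ Summable (fun n : ℕ => K (n + 1) ^ (-(1 : ℝ) / ((n : ℝ) + 1))) := by
  intro hsum
  set F : ℕ → ℝ := fun n : ℕ => M (n + 1) ^ (-(1 : ℝ) / ((n : ℝ) + 1)) with hF
  set c : ℝ := min 1 a⁻¹ with hc
  have hcpos : 0 < c := lt_min one_pos (inv_pos.2 ha)
  have hc1 : c ≤ 1 := min_le_left _ _
  have key : ∀ n : ℕ, (c / 2) * min (F n) b⁻¹
      ≤ K (n + 1) ^ (-(1 : ℝ) / ((n : ℝ) + 1)) := by
    intro n
    set e : ℝ := -(1 : ℝ) / ((n : ℝ) + 1) with he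
    have hn1 : (0 : ℝ) < (n : ℝ) + 1 := by positivity
    have hneg : e ≤ 0 := by
      rw [he]
      apply div_nonpos_of_nonpos_of_nonneg <;> linarith
    have hegm1 : (-1 : ℝ) ≤ e := by
      rw [he, neg_div, neg_le_neg_iff, div_le_one hn1]
      linarith
    have hMpos := hM (n + 1) (by omega)
    have hKpos := hK (n + 1) (by omega)
    have hbpow : (0 : ℝ) < b ^ (n + 1) := pow_pos hb _
    have haM : 0 < a * M (n + 1) := mul_pos ha hMpos
    have hmaxpos : 0 < max (a * M (n + 1)) (b ^ (n + 1)) := lt_max_iff.2 (Or.inl haM)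
    have h1 : K (n + 1) ≤ 2 * max (a * M (n + 1)) (b ^ (n + 1)) := by
      calc K (n + 1) ≤ a * M (n + 1) + b ^ (n + 1) := hbound (n + 1) (by omega)
        _ ≤ max (a * M (n + 1)) (b ^ (n + 1)) + max (a * M (n + 1)) (b ^ (n + 1)) :=
            add_le_add (le_max_left _ _) (le_max_right _ _)
        _ = 2 * max (a * M (n + 1)) (b ^ (n + 1)) := (two_mul _).symm
    have h2 : (2 * max (a * M (n + 1)) (b ^ (n + 1))) ^ e ≤ K (n + 1) ^ e :=
      Real.rpow_le_rpow_of_nonpos hKpos h1 hneg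
    have h3 : (2 * max (a * M (n + 1)) (b ^ (n + 1))) ^ e
        = 2 ^ e * (max (a * M (n + 1)) (b ^ (n + 1))) ^ e :=
      Real.mul_rpow (by norm_num) hmaxpos.le
    have h4 : (1 : ℝ) / 2 ≤ 2 ^ e := by
      have := Real.rpow_le_rpow_of_exponent_le (x := 2) (by norm_num) hegm1
      rwa [Real.rpow_neg_one, show ((2:ℝ)⁻¹) = 1 / 2 by norm_num] at this
    -- max ^ e = min of rpows
    have h5 : (max (a * M (n + 1)) (b ^ (n + 1))) ^ e
        = min ((a * M (n + 1)) ^ e) ((b ^ (n + 1)) ^ e) := by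
      rcases le_total (a * M (n + 1)) (b ^ (n + 1)) with hle | hle
      · rw [max_eq_right hle, min_eq_right (Real.rpow_le_rpow_of_nonpos haM hle hneg)]
      · rw [max_eq_left hle, min_eq_left (Real.rpow_le_rpow_of_nonpos hbpow hle hneg)]
    have h6 : (b ^ (n + 1) : ℝ) ^ e = b⁻¹ := by
      rw [← Real.rpow_natCast b (n + 1), ← Real.rpow_mul hb.le]
      have : ((n + 1 : ℕ) : ℝ) * e = -1 := by
        push_cast [he]; field_simp
      rw [this, Real.rpow_neg_one]
    have h7 : c * M (n + 1) ^ e ≤ (a * M (n + 1)) ^ e := by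
      rw [Real.mul_rpow ha.le hMpos.le]
      have hMe : 0 < M (n + 1) ^ e := Real.rpow_pos_of_pos hMpos e
      have : c ≤ a ^ e := by
        rcases le_total a 1 with h | h
        · calc c ≤ 1 := hc1
            _ = a ^ (0 : ℝ) := (Real.rpow_zero a).symm
            _ ≤ a ^ e := Real.rpow_le_rpow_of_exponent_ge ha h hneg
        · calc c ≤ a⁻¹ := min_le_right _ _
            _ = a ^ (-1 : ℝ) := (Real.rpow_neg_one a).symm
            _ ≤ a ^ e := Real.rpow_le_rpow_of_exponent_le h hegm1
      nlinarith
    have h8 : c * min (M (n + 1) ^ e) b⁻¹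
        ≤ min ((a * M (n + 1)) ^ e) ((b ^ (n + 1)) ^ e) := by
      rw [h6]
      rcases le_total (M (n + 1) ^ e) b⁻¹ with h | h
      · rw [min_eq_left h]
        exact le_min h7 (by nlinarith [inv_pos.2 hb])
      · rw [min_eq_right h]
        refine le_min ?_ (by nlinarith [inv_pos.2 hb])
        calc c * b⁻¹ ≤ c * M (n + 1) ^ e := by nlinarith
          _ ≤ (a * M (n + 1)) ^ e := h7
    calc (c / 2) * min (F n) b⁻¹
        = (1 / 2) * (c * min (M (n + 1) ^ e) b⁻¹) := by rw [hF]; ring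
      _ ≤ 2 ^ e * min ((a * M (n + 1)) ^ e) ((b ^ (n + 1)) ^ e) := by
          have hmin0 : 0 ≤ c * min (M (n + 1) ^ e) b⁻¹ := by
            have : 0 ≤ min (M (n + 1) ^ e) b⁻¹ :=
              le_min (Real.rpow_pos_of_pos hMpos e).le (inv_pos.2 hb).le
            positivity
          have h2e : (0:ℝ) ≤ 2 ^ e := (Real.rpow_pos_of_pos two_pos e).le
          nlinarith
      _ = (2 * max (a * M (n + 1)) (b ^ (n + 1))) ^ e := by rw [h3, h5]
      _ ≤ K (n + 1) ^ e := h2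
  -- comparison: the min sequence is summable
  have hmin : Summable (fun n : ℕ => min (F n) b⁻¹) := by
    have hsum2 : Summable (fun n : ℕ => (c / 2) * min (F n) b⁻¹) := by
      refine Summable.of_nonneg_of_le (fun n => ?_) key hsum
      have : 0 ≤ min (F n) b⁻¹ :=
        le_min (Real.rpow_pos_of_pos (hM (n + 1) (by omega)) _).le (inv_pos.2 hb).le
      positivity
    have := hsum2.mul_left (c / 2)⁻¹
    refine this.congr fun n => ?_
    field_simp
  -- eventually the min is F n
  have h0 := hmin.tendsto_atTop_zero
  have hev : ∀ᶠ n in Filter.atTop, min (F n) b⁻¹ < b⁻¹ :=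
    h0.eventually_lt_const (inv_pos.2 hb)
  obtain ⟨N, hN⟩ := Filter.eventually_atTop.1 hev
  have hNeq : ∀ n ≥ N, min (F n) b⁻¹ = F n := by
    intro n hn
    have := hN n hn
    rcases min_lt_iff.1 this with h | h
    · exact min_eq_left h.le
    · exact absurd h (lt_irrefl _)
  have hFsum : Summable F := by
    have h1 : Summable (fun n : ℕ => min (F (n + N)) b⁻¹) :=
      (summable_nat_add_iff N).2 hmin
    have h2 : Summable (fun n : ℕ => F (n + N)) :=
      h1.congr fun n => hNeq (n + N) (Nat.le_add_left N n)
    exact (summable_nat_add_iff N).1 h2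
  exact hdiv hFsum
end

section
/- (Lemma 3.3(b).) Let (a_m)_{m≥1} be a sequence of positive real numbers such that ∑_{m=1}^∞ a_m = ∞. Then for any positive integer j, one has ∑_{m=1}^∞ a_m^{1+j/m} = ∞. -/
/-- **Lemma 3.3(b).** If `(a m)` is a sequence of positive reals (indexed by `m ≥ 1`)
with `∑ a m = ∞`, then for any positive integer `j`, `∑ a m ^ (1 + j/m) = ∞`.
Divergence of these nonnegative series is expressed as non-summability. -/
theorem lemma_3_3_b (a : ℕ → ℝ) (ha : ∀ m : ℕ, 1 ≤ m → 0 < a m)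
    (hdiv : ¬ Summable (fun m : ℕ => a (m + 1)))
    (j : ℕ) (hj : 0 < j) :
    ¬ Summable (fun m : ℕ => a (m + 1) ^ (1 + (j : ℝ) / ((m : ℝ) + 1))) := by
  intro hs
  apply hdiv
  set c : ℝ := (1/2 : ℝ) ^ ((1 : ℝ) / j) with hc
  have hc0 : 0 < c := Real.rpow_pos_of_pos (by norm_num) _
  have hc1 : c < 1 := by
    apply Real.rpow_lt_one (by norm_num) (by norm_num)
    positivity
  have hgeo : Summable (fun m : ℕ => c ^ (m + 1)) := by
    have := summable_geometric_of_lt_one hc0.le hc1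
    exact (this.mul_left c).congr (fun m => by ring)
  have hkey : ∀ m : ℕ, a (m + 1) ≤
      2 * a (m + 1) ^ (1 + (j : ℝ) / ((m : ℝ) + 1)) + c ^ (m + 1) := by
    intro m
    set x := a (m + 1) with hx
    have hx0 : 0 < x := ha (m + 1) (Nat.le_add_left 1 m)
    set e : ℝ := (j : ℝ) / ((m : ℝ) + 1) with he
    have he0 : 0 ≤ e := by positivity
    by_cases hcase : c ^ (m + 1) ≤ x
    · have h1 : (c ^ (m + 1) : ℝ) ^ e ≤ x ^ e :=
        Real.rpow_le_rpow (by positivity) hcase he0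
      have h2 : (c ^ (m + 1) : ℝ) ^ e = 1/2 := by
        have hj0 : (j : ℝ) ≠ 0 := Nat.cast_ne_zero.mpr hj.ne'
        have hm0 : (m : ℝ) + 1 ≠ 0 := by positivity
        have hexp : (1 : ℝ) / j * (((m + 1 : ℕ)) : ℝ) * e = 1 := by
          rw [he]; push_cast; field_simp
        rw [hc, ← Real.rpow_natCast ((1/2 : ℝ) ^ ((1:ℝ)/j)) (m + 1),
          ← Real.rpow_mul (by norm_num : (0:ℝ) ≤ 1/2),
          ← Real.rpow_mul (by norm_num : (0:ℝ) ≤ 1/2), hexp, Real.rpow_one]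
      have h3 : x * (1/2) ≤ x * x ^ e := by
        apply mul_le_mul_of_nonneg_left _ hx0.le
        rw [← h2]; exact h1
      have h4 : x * x ^ e = x ^ (1 + e) := by
        rw [Real.rpow_add hx0, Real.rpow_one]
      nlinarith [pow_pos hc0 (m + 1), Real.rpow_pos_of_pos hx0 (1 + e)]
    · push_neg at hcase
      have : (0 : ℝ) ≤ x ^ (1 + e) := Real.rpow_nonneg hx0.le _
      nlinarith
  exact Summable.of_nonneg_of_le (fun m => (ha (m + 1) (Nat.le_add_left 1 m)).le) hkey
    ((hs.mul_left 2).add hgeo)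
end

section
/- (Lemma 4.1.) Fix an integer n ≥ 1 and a constant c > 0. Let Θ : [0,∞) → [0,∞) be a nonincreasing function with Θ(λ) → 0 as λ → ∞, satisfying ∫_1^∞ Θ(t) t^{−1} dt = ∞ and Θ(λ) ≥ c λ^{−1/2} for all λ ≥ 1. Then there exist a constant C > 0 and an integer m₀ ≥ 1 such that for all m ≥ m₀, the quantity A_m = ∫_0^∞ λ^{m+n} e^{−λΘ(λ)} dλ is finite and satisfies A_m ≤ C·(2m/Θ(m⁴))^m. -/
open MeasureTheory Set Filter
open scoped ENNReal Topology

/-!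
Split the integral at `M = m⁴` and put `θ = Θ(M)`. On `(0, M]` monotonicity gives `Θ(λ) ≥ θ`,
so the integral there is at most `∫₀^∞ λ^(m+n) e^(-θλ) dλ = (m+n)!/θ^(m+n+1)`. On `(M, ∞)`
the lower bound `Θ(λ) ≥ c λ^(-1/2)` makes the integrand at most `λ^(m+n) e^(-c√λ) ≤ λ^(-2)`
once `m ≥ max (n+2) (16/c)²`, contributing at most `1/M ≤ 1`. Finally `θ ≥ c/m²` and
`(m+n)! ≤ 2ⁿ m^(m+n)` bound the main term by `2ⁿ c^(-(n+1)) m^(3n+2) (m/θ)^m`, and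
`m^(3n+2) ≤ 2^m` for large `m`.
-/

open Real
open scoped Nat

theorem Nat.factorial_add_le_two_pow_mul_pow {m n : ℕ} (h : n ≤ m) :
    (m + n)! ≤ 2 ^ n * m ^ (m + n) := by
  calc (m + n)! = m ! * (m + n).descFactorial n := by
        simpa using (Nat.factorial_mul_descFactorial (Nat.le_add_left n m)).symm
    _ ≤ m ^ m * (2 * m) ^ n := by
        gcongr
        · exact Nat.factorial_le_pow m
        · exact (Nat.descFactorial_le_pow _ _).trans (Nat.pow_le_pow_left (by omega) n)
    _ = 2 ^ n * m ^ (m + n) := by ring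

theorem pow_le_exp_of_mul_le {s t : ℝ} {j : ℕ} (hs : 0 ≤ s) (h : j * s ≤ t) :
    s ^ j ≤ exp t :=
  calc s ^ j ≤ exp s ^ j := by gcongr; linarith [add_one_le_exp s]
    _ = exp (j * s) := (exp_nat_mul s j).symm
    _ ≤ exp t := exp_le_exp.mpr h

theorem pow_mul_exp_neg_le_inv_sq {c s : ℝ} {k : ℕ} (hs : 0 < s) (hk : 8 * (k + 2) ≤ c * s ^ 3) :
    (s ^ 8) ^ k * exp (-(c * s ^ 4)) ≤ ((s ^ 8) ^ 2)⁻¹ := by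
  have key : (s ^ 8) ^ (k + 2) ≤ exp (c * s ^ 4) := by
    rw [← pow_mul]
    apply pow_le_exp_of_mul_le hs.le
    push_cast
    nlinarith
  rw [exp_neg, ← div_eq_mul_inv, div_le_iff₀ (exp_pos _), inv_mul_eq_div,
    le_div_iff₀ (by positivity), ← pow_add]
  exact key

theorem pow_mul_exp_neg_mul_le_rpow_neg_two {Θ : ℝ → ℝ} {c : ℝ} (hc : 0 < c)
    (hlow : ∀ x : ℝ, 1 ≤ x → c * x ^ (-(1 : ℝ) / 2) ≤ Θ x) {m k : ℕ} (hk : k + 2 ≤ 2 * m)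
    (hm : (16 / c) ^ 2 ≤ m) {x : ℝ} (hx : (m : ℝ) ^ 4 ≤ x) :
    x ^ k * exp (-(x * Θ x)) ≤ x ^ (-2 : ℝ) := by
  have hm1 : (1 : ℝ) ≤ m :=
    Nat.one_le_cast.mpr (Nat.cast_pos.mp ((by positivity : (0 : ℝ) < (16 / c) ^ 2).trans_le hm))
  have hx1 : 1 ≤ x := (one_le_pow₀ hm1).trans hx
  -- In `s = x^(1/8)` everything is polynomial: `s^(8(k+2)) ≤ e^(8(k+2)s) ≤ e^(c s⁴)`.
  set s := x ^ ((8 : ℕ) : ℝ)⁻¹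
  have hs : 0 < s := by positivity
  have hsx : s ^ 8 = x := rpow_inv_natCast_pow (by linarith) (by norm_num)
  have hs2 : (m : ℝ) ≤ s ^ 2 := by
    rw [← pow_le_pow_iff_left₀ (by positivity) (by positivity) (by norm_num : 4 ≠ 0), ← pow_mul]
    simpa [hsx] using hx
  have hs1 : 16 / c ≤ s := by
    rw [← pow_le_pow_iff_left₀ (by positivity) hs.le (by norm_num : 2 ≠ 0)]
    exact hm.trans hs2
  have hk8 : 8 * ((k : ℝ) + 2) ≤ c * s ^ 3 := by
    have : (k : ℝ) + 2 ≤ 2 * m := by exact_mod_cast hk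
    have : 16 ≤ c * s := by rwa [div_le_iff₀' hc] at hs1
    nlinarith
  have hΘ : c * s ^ 4 ≤ x * Θ x := by
    have hrpow : x ^ (-(1 : ℝ) / 2) = (s ^ 4)⁻¹ := by
      rw [← hsx, ← rpow_natCast_mul hs.le,
        show ((8 : ℕ) : ℝ) * (-(1 : ℝ) / 2) = -((4 : ℕ) : ℝ) by norm_num, rpow_neg hs.le,
        rpow_natCast]
    have := hlow x hx1
    rw [hrpow] at this
    calc c * s ^ 4 = x * (c * (s ^ 4)⁻¹) := by rw [← hsx]; field_simp
      _ ≤ x * Θ x := by gcongr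
  calc x ^ k * exp (-(x * Θ x)) ≤ (s ^ 8) ^ k * exp (-(c * s ^ 4)) := by
        rw [hsx]; gcongr
    _ ≤ ((s ^ 8) ^ 2)⁻¹ := pow_mul_exp_neg_le_inv_sq hs hk8
    _ = x ^ (-2 : ℝ) := by rw [hsx, rpow_neg (by linarith), rpow_two]

theorem div_sq_le_apply_pow_four {Θ : ℝ → ℝ} {c : ℝ}
    (hlow : ∀ x : ℝ, 1 ≤ x → c * x ^ (-(1 : ℝ) / 2) ≤ Θ x) {y : ℝ} (hy : 1 ≤ y) :
    c / y ^ 2 ≤ Θ (y ^ 4) := by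
  have hpow : (y ^ 4) ^ (-(1 : ℝ) / 2) = (y ^ 2)⁻¹ := by
    rw [← rpow_natCast, ← rpow_mul (by linarith),
      show ((4 : ℕ) : ℝ) * (-(1 : ℝ) / 2) = -((2 : ℕ) : ℝ) by norm_num, rpow_neg (by linarith),
      rpow_natCast]
  rw [div_eq_mul_inv, ← hpow]
  exact hlow (y ^ 4) (one_le_pow₀ hy)

theorem integrableOn_Ioi_and_integral_le_of_le_pow_mul_exp {f : ℝ → ℝ} {k : ℕ} {θ M : ℝ}
    (hθ : 0 < θ) (hM : 0 < M) (hf : AEStronglyMeasurable f (volume.restrict (Ioi 0)))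
    (hf0 : ∀ x ∈ Ioi 0, 0 ≤ f x) (hfront : ∀ x ∈ Ioc 0 M, f x ≤ x ^ k * exp (-(θ * x)))
    (htail : ∀ x ∈ Ioi M, f x ≤ x ^ (-2 : ℝ)) :
    IntegrableOn f (Ioi 0) ∧ ∫ x in Ioi 0, f x ≤ k ! / θ ^ (k + 1) + M⁻¹ := by
  have hg : IntegrableOn (fun x => x ^ k * exp (-(θ * x))) (Ioc 0 M) :=
    Continuous.integrableOn_Ioc (by fun_prop)
  have hh : IntegrableOn (fun x : ℝ => x ^ (-2 : ℝ)) (Ioi M) :=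
    integrableOn_Ioi_rpow_of_lt (by norm_num) hM
  have hf_front : IntegrableOn f (Ioc 0 M) :=
    hg.mono' (hf.mono_set Ioc_subset_Ioi_self) <| (ae_restrict_mem measurableSet_Ioc).mono
      fun x hx => (norm_of_nonneg (hf0 x hx.1)).trans_le (hfront x hx)
  have hf_tail : IntegrableOn f (Ioi M) :=
    hh.mono' (hf.mono_set (Ioi_subset_Ioi hM.le)) <| (ae_restrict_mem measurableSet_Ioi).mono
      fun x hx => (norm_of_nonneg (hf0 x (hM.trans hx))).trans_le (htail x hx)
  rw [← Ioc_union_Ioi_eq_Ioi hM.le]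
  refine ⟨hf_front.union hf_tail, ?_⟩
  rw [setIntegral_union (Ioc_disjoint_Ioi le_rfl) measurableSet_Ioi hf_front hf_tail]
  gcongr
  · calc ∫ x in Ioc 0 M, f x ≤ ∫ x in Ioc 0 M, x ^ k * exp (-(θ * x)) :=
          setIntegral_mono_on hf_front hg measurableSet_Ioc hfront
      _ = ∫ x in 0..M, x ^ k * exp (-(θ * x)) := (intervalIntegral.integral_of_le hM.le).symm
      _ ≤ k ! / θ ^ (k + 1) := intervalIntegral_pow_mul_exp_neg_le hM.le hθ
  · calc ∫ x in Ioi M, f x ≤ ∫ x in Ioi M, x ^ (-2 : ℝ) :=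
          setIntegral_mono_on hf_tail hh measurableSet_Ioi htail
      _ = M⁻¹ := by rw [integral_Ioi_rpow_of_lt (by norm_num) hM]; norm_num [rpow_neg_one]

theorem integrableOn_Ioi_and_integral_pow_mul_exp_neg_mul_le {Θ : ℝ → ℝ} {c : ℝ} (hc : 0 < c)
    (hmono : AntitoneOn Θ (Ici 0)) (hlow : ∀ x : ℝ, 1 ≤ x → c * x ^ (-(1 : ℝ) / 2) ≤ Θ x)
    {m k : ℕ} (hk : k + 2 ≤ 2 * m) (hm : (16 / c) ^ 2 ≤ m) (hθ : 0 < Θ ((m : ℝ) ^ 4)) :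
    IntegrableOn (fun x => x ^ k * exp (-(x * Θ x))) (Ioi 0) ∧
      ∫ x in Ioi 0, x ^ k * exp (-(x * Θ x))
        ≤ k ! / Θ ((m : ℝ) ^ 4) ^ (k + 1) + ((m : ℝ) ^ 4)⁻¹ := by
  have hM : (0 : ℝ) < (m : ℝ) ^ 4 :=
    pow_pos ((by positivity : (0 : ℝ) < (16 / c) ^ 2).trans_le hm) 4
  have hΘ : AEMeasurable Θ (volume.restrict (Ioi 0)) :=
    aemeasurable_restrict_of_antitoneOn measurableSet_Ioi (hmono.mono Ioi_subset_Ici_self)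
  refine integrableOn_Ioi_and_integral_le_of_le_pow_mul_exp hθ hM
    (by fun_prop) (fun x (hx : 0 < x) => by positivity) (fun x hx => ?_) (fun x hx => ?_)
  · have hx0 : 0 < x := hx.1
    have : Θ ((m : ℝ) ^ 4) ≤ Θ x := hmono hx0.le hM.le hx.2
    rw [mul_comm (Θ _) x]
    gcongr
  · exact pow_mul_exp_neg_mul_le_rpow_neg_two hc hlow hk hm hx.le

theorem factorial_add_div_pow_le {m n : ℕ} {c θ : ℝ} (hc : 0 < c) (hm : 0 < m) (hnm : n ≤ m)
    (hθ : c / (m : ℝ) ^ 2 ≤ θ) (hpow : (m : ℝ) ^ (3 * n + 2) ≤ 2 ^ m) :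
    ((m + n)! : ℝ) / θ ^ (m + n + 1) ≤ 2 ^ n / c ^ (n + 1) * (2 * m / θ) ^ m := by
  have hm0 : (0 : ℝ) < m := by exact_mod_cast hm
  have hθ0 : 0 < θ := (by positivity : 0 < c / (m : ℝ) ^ 2).trans_le hθ
  have hθinv : θ⁻¹ ≤ (m : ℝ) ^ 2 / c := by
    simpa only [inv_div] using inv_anti₀ (by positivity) hθ
  have hfact : ((m + n)! : ℝ) ≤ 2 ^ n * (m : ℝ) ^ (m + n) := by
    exact_mod_cast Nat.factorial_add_le_two_pow_mul_pow hnm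
  calc ((m + n)! : ℝ) / θ ^ (m + n + 1) = (m + n)! * θ⁻¹ ^ (n + 1) * θ⁻¹ ^ m := by
        rw [div_eq_mul_inv, ← inv_pow]; ring
    _ ≤ 2 ^ n * (m : ℝ) ^ (m + n) * ((m : ℝ) ^ 2 / c) ^ (n + 1) * θ⁻¹ ^ m := by gcongr
    _ = 2 ^ n / c ^ (n + 1) * (m : ℝ) ^ (3 * n + 2) * (m / θ) ^ m := by ring
    _ ≤ 2 ^ n / c ^ (n + 1) * 2 ^ m * (m / θ) ^ m := by gcongr
    _ = 2 ^ n / c ^ (n + 1) * (2 * m / θ) ^ m := by ring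

theorem lemma_4_1_general (n : ℕ) (c : ℝ) (hc : 0 < c) (Θ : ℝ → ℝ)
    (hmono : AntitoneOn Θ (Ici (0 : ℝ)))
    (hlim : Tendsto Θ atTop (𝓝 0))
    (hlow : ∀ x : ℝ, 1 ≤ x → c * x ^ (-(1 : ℝ) / 2) ≤ Θ x) :
    ∃ C : ℝ, 0 < C ∧ ∃ m₀ : ℕ, 1 ≤ m₀ ∧ ∀ m : ℕ, m₀ ≤ m →
      IntegrableOn (fun lam : ℝ => lam ^ (m + n) * Real.exp (-(lam * Θ lam)))
        (Ioi (0 : ℝ)) volume ∧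
      (∫ lam in Ioi (0 : ℝ), lam ^ (m + n) * Real.exp (-(lam * Θ lam)))
        ≤ C * (2 * (m : ℝ) / Θ ((m : ℝ) ^ 4)) ^ m := by
  have hΘ_small : ∀ᶠ m : ℕ in atTop, Θ ((m : ℝ) ^ 4) < 1 :=
    (hlim.comp ((tendsto_pow_atTop (by norm_num)).comp tendsto_natCast_atTop_atTop)
      ).eventually_lt_const one_pos
  have hpow_small : ∀ᶠ m : ℕ in atTop, (m : ℝ) ^ (3 * n + 2) < 2 ^ m :=
    ((tendsto_pow_const_div_const_pow_of_one_lt _ one_lt_two).eventually_lt_const one_pos).mono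
      fun m h => (div_lt_one (by positivity)).mp h
  obtain ⟨m₀, hm₀⟩ := eventually_atTop.mp <| (eventually_ge_atTop (n + 2)).and <|
    (tendsto_natCast_atTop_atTop.eventually_ge_atTop ((16 / c) ^ 2)).and (hΘ_small.and hpow_small)
  refine ⟨2 ^ n / c ^ (n + 1) + 1, by positivity, max m₀ 1, le_max_right _ _, fun m hm => ?_⟩
  obtain ⟨hnm, hm16, hΘ1, hpow⟩ := hm₀ m (le_of_max_le_left hm)
  have hm1 : 1 ≤ m := le_of_max_le_right hm
  have hm1' : (1 : ℝ) ≤ m := by exact_mod_cast hm1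
  have hθ : c / (m : ℝ) ^ 2 ≤ Θ ((m : ℝ) ^ 4) := div_sq_le_apply_pow_four hlow hm1'
  have hθ0 : 0 < Θ ((m : ℝ) ^ 4) := (by positivity : 0 < c / (m : ℝ) ^ 2).trans_le hθ
  obtain ⟨hint, hle⟩ := integrableOn_Ioi_and_integral_pow_mul_exp_neg_mul_le (k := m + n)
    hc hmono hlow (by omega) hm16 hθ0
  refine ⟨hint, hle.trans ?_⟩
  rw [add_mul, one_mul]
  gcongr
  · exact factorial_add_div_pow_le hc hm1 (by omega) hθ hpow.le
  · have h2m : 1 ≤ 2 * (m : ℝ) / Θ ((m : ℝ) ^ 4) := by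
      rw [le_div_iff₀ hθ0]
      linarith
    exact (inv_le_one_of_one_le₀ (one_le_pow₀ hm1')).trans (one_le_pow₀ h2m)

/-- **Lemma 4.1.** Fix an integer `n ≥ 1` and `c > 0`. Let `Θ : [0,∞) → [0,∞)` be
nonincreasing with `Θ(λ) → 0` as `λ → ∞`, with `∫_1^∞ Θ(t)/t dt = ∞` and
`Θ(λ) ≥ c λ^{-1/2}` for `λ ≥ 1`. Then there are `C > 0` and `m₀ ≥ 1` such that for
all `m ≥ m₀` the integral `A_m = ∫_0^∞ λ^{m+n} e^{-λΘ(λ)} dλ` is finite and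
`A_m ≤ C (2m/Θ(m⁴))^m`. -/
theorem lemma_4_1 (n : ℕ) (hn : 1 ≤ n) (c : ℝ) (hc : 0 < c) (Θ : ℝ → ℝ)
    (hΘ0 : ∀ x : ℝ, 0 ≤ x → 0 ≤ Θ x)
    (hmono : AntitoneOn Θ (Ici (0 : ℝ)))
    (hlim : Tendsto Θ atTop (𝓝 0))
    (hdiv : ∫⁻ t in Ici (1 : ℝ), ENNReal.ofReal (Θ t / t) = ∞)
    (hlow : ∀ x : ℝ, 1 ≤ x → c * x ^ (-(1 : ℝ) / 2) ≤ Θ x) :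
    ∃ C : ℝ, 0 < C ∧ ∃ m₀ : ℕ, 1 ≤ m₀ ∧ ∀ m : ℕ, m₀ ≤ m →
      IntegrableOn (fun lam : ℝ => lam ^ (m + n) * Real.exp (-(lam * Θ lam)))
        (Ioi (0 : ℝ)) volume ∧
      (∫ lam in Ioi (0 : ℝ), lam ^ (m + n) * Real.exp (-(lam * Θ lam)))
        ≤ C * (2 * (m : ℝ) / Θ ((m : ℝ) ^ 4)) ^ m :=
  lemma_4_1_general n c hc Θ hmono hlim hlow
end
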